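/- Let Γ be an abelian subgroup of Aff(2,ℍ) acting freely on ℍ². Then Γ is conjugate in Aff(2,ℍ) to a subgroup of the group of all matrices of the form [[1,0,r],[0,d,0],[0,0,1]] with d ≠ 0, or to a subgroup of the group of all matrices of the form [[1,b,r],[0,1,s],[0,0,1]]. -/

import Mathlib

/-!
A fixed-point-free affine map `x ↦ L x + t` of a finite-dimensional real space has `L - 1`
non-surjective, hence `L` fixes a nonzero vector. For a quaternionic `2 × 2` matrix that vector can
be normalised to `(1, 0)` or `(e, 1)`, and conjugating by a matrix with this first column makes `L`
upper triangular with a `1` in the corner. If `Γ` does not already lie in the second group, bring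
some `g ∈ Γ` outside it to the form `(x, y) ↦ (x + b y + r, d y + s)` with `(b, d) ≠ (0, 1)`.
If `d = 1` then `b ≠ 0`, and an element `h` commuting with `g` is upper triangular with
`b h₁₁ = h₀₀ b`; since `h` is free, one of `h₀₀, h₁₁` is `1`, hence both are. If `d ≠ 1`, a shear
conjugates `g` to `(x, y) ↦ (x + r, d y)` with `r ≠ 0`, and commuting with this forces the first
shape.
-/

open Quaternion Matrix

noncomputable section

/-- Membership in Aff(2,ℍ): a 3×3 quaternionic matrix whose last row is (0,0,1). -/
def IsAffMat (M : Matrix (Fin 3) (Fin 3) ℍ[ℝ]) : Prop :=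
  M 2 0 = 0 ∧ M 2 1 = 0 ∧ M 2 2 = 1

/-- The affine action of a 3×3 quaternionic matrix on ℍ²:
`(x,y) ↦ (ax+by+r, cx+dy+s)`. -/
def affAct (M : Matrix (Fin 3) (Fin 3) ℍ[ℝ]) (p : ℍ[ℝ] × ℍ[ℝ]) : ℍ[ℝ] × ℍ[ℝ] :=
  (M 0 0 * p.1 + M 0 1 * p.2 + M 0 2, M 1 0 * p.1 + M 1 1 * p.2 + M 1 2)

/-- A subgroup of GL(3,ℍ) (whose elements are affine) acts freely on ℍ² if no element
other than the identity fixes a point. -/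
def ActsFreely (Γ : Subgroup (Matrix (Fin 3) (Fin 3) ℍ[ℝ])ˣ) : Prop :=
  ∀ g ∈ Γ, (∃ p : ℍ[ℝ] × ℍ[ℝ], affAct g.val p = p) → g = 1
/-- Shape `[[1,0,r],[0,d,0],[0,0,1]]` with `d ≠ 0`. -/
def InK1 (M : Matrix (Fin 3) (Fin 3) ℍ[ℝ]) : Prop :=
  M 0 0 = 1 ∧ M 0 1 = 0 ∧ M 1 0 = 0 ∧ M 1 1 ≠ 0 ∧ M 1 2 = 0 ∧ IsAffMat M

/-- Shape `[[1,b,r],[0,1,s],[0,0,1]]`. -/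
def InK2 (M : Matrix (Fin 3) (Fin 3) ℍ[ℝ]) : Prop :=
  M 0 0 = 1 ∧ M 1 0 = 0 ∧ M 1 1 = 1 ∧ IsAffMat M

local notation "𝕄" => Matrix (Fin 3) (Fin 3) ℍ[ℝ]

theorem LinearMap.exists_ne_zero_apply_eq_self_of_forall_apply_add_ne {K V : Type*} [Field K]
    [AddCommGroup V] [Module K V] [FiniteDimensional K V] (f : V →ₗ[K] V) (t : V)
    (h : ∀ x, f x + t ≠ x) : ∃ v ≠ 0, f v = v := by
  have not_inj : ¬ Function.Injective ⇑(f - LinearMap.id : V →ₗ[K] V) := fun hi => by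
    obtain ⟨x, hx⟩ := LinearMap.injective_iff_surjective.mp hi (-t)
    rw [LinearMap.sub_apply, LinearMap.id_apply] at hx
    exact h x (by rw [← sub_neg_eq_add, ← hx, sub_sub_cancel])
  simp only [injective_iff_map_eq_zero, not_forall] at not_inj
  obtain ⟨v, hv, hv0⟩ := not_inj
  exact ⟨v, hv0, sub_eq_zero.mp hv⟩

theorem fixes_one_zero_or_exists_fixes_e_one {a b c d : ℍ[ℝ]} {v : ℍ[ℝ] × ℍ[ℝ]} (hv : v ≠ 0)
    (h1 : a * v.1 + b * v.2 = v.1) (h2 : c * v.1 + d * v.2 = v.2) :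
    (a = 1 ∧ c = 0) ∨ ∃ e, a * e + b = e ∧ c * e + d = 1 := by
  obtain ⟨v₁, v₂⟩ := v
  by_cases hv₂ : v₂ = 0
  · subst hv₂
    have hv₁ : v₁ ≠ 0 := fun h => hv (by simp [h])
    simp only [mul_zero, add_zero] at h1 h2
    exact Or.inl ⟨mul_right_cancel₀ hv₁ (by rw [h1, one_mul]),
      (mul_eq_zero.mp h2).resolve_right hv₁⟩
  · refine Or.inr ⟨v₁ * v₂⁻¹, ?_, ?_⟩
    · rw [← mul_assoc, ← mul_inv_cancel_right₀ hv₂ b, ← add_mul, h1]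
    · rw [← mul_assoc, ← mul_inv_cancel_right₀ hv₂ d, ← add_mul, h2, mul_inv_cancel₀ hv₂]

theorem IsAffMat.eta {M : 𝕄} (hM : IsAffMat M) :
    M = !![M 0 0, M 0 1, M 0 2; M 1 0, M 1 1, M 1 2; 0, 0, 1] := by
  obtain ⟨h0, h1, h2⟩ := hM
  conv_lhs => rw [Matrix.eta_fin_three M, h0, h1, h2]

theorem IsAffMat.exists_eq {M : 𝕄} (hM : IsAffMat M) :
    ∃ a b r c d s, M = !![a, b, r; c, d, s; 0, 0, 1] :=
  ⟨_, _, _, _, _, _, hM.eta⟩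

theorem IsAffMat.one : IsAffMat (1 : 𝕄) := by
  simp [IsAffMat]

theorem IsAffMat.mul {M N : 𝕄} (hM : IsAffMat M) (hN : IsAffMat N) : IsAffMat (M * N) := by
  rw [hM.eta, hN.eta]
  simp [IsAffMat]

theorem IsAffMat.inv {P : 𝕄ˣ} (hP : IsAffMat P.val) : IsAffMat (P⁻¹ : 𝕄ˣ).val := by
  have h := congrArg (fun M : 𝕄 => (M 2 0, M 2 1, M 2 2)) P.mul_inv
  obtain ⟨h0, h1, h2⟩ := hP
  simpa [Matrix.mul_apply, Fin.sum_univ_three, h0, h1, h2, IsAffMat] using h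

theorem IsAffMat.conj {P g : 𝕄ˣ} (hP : IsAffMat P.val) (hg : IsAffMat g.val) :
    IsAffMat (P⁻¹ * g * P).val :=
  (hP.inv.mul hg).mul hP

theorem IsAffMat.units_apply_one_one_ne_zero {h : 𝕄ˣ} (hh : IsAffMat h.val) (h10 : h.val 1 0 = 0) :
    h.val 1 1 ≠ 0 := by
  intro h11
  have h1 := congrFun (congrFun h.mul_inv 1) 1
  rw [Matrix.mul_apply, Fin.sum_univ_three, h10, h11, hh.inv.2.1] at h1
  simp at h1

theorem affAct_mul {M N : 𝕄} (hN : IsAffMat N) (p : ℍ[ℝ] × ℍ[ℝ]) :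
    affAct (M * N) p = affAct M (affAct N p) := by
  obtain ⟨h0, h1, h2⟩ := hN
  simp only [affAct, Matrix.mul_apply, Fin.sum_univ_three, h0, h1, h2]
  ext <;> noncomm_ring

def IsFreeAffine (g : 𝕄ˣ) : Prop :=
  IsAffMat g.val ∧ ∀ p, affAct g.val p = p → g = 1

theorem IsFreeAffine.conj {P g : 𝕄ˣ} (hP : IsAffMat P.val) (hg : IsFreeAffine g) :
    IsFreeAffine (P⁻¹ * g * P) := by
  refine ⟨hP.conj hg.1, fun q hq => ?_⟩
  have hfix : affAct g.val (affAct P.val q) = affAct P.val q :=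
    calc affAct g.val (affAct P.val q) = affAct (P * (P⁻¹ * g * P)).val q := by
          rw [← affAct_mul hP, ← Units.val_mul, mul_assoc P⁻¹, mul_inv_cancel_left]
      _ = affAct P.val q := by rw [Units.val_mul, affAct_mul (hP.conj hg.1), hq]
  rw [hg.2 _ hfix]
  group

theorem IsFreeAffine.exists_linear_fixed {g : 𝕄ˣ} (hg : IsFreeAffine g) :
    ∃ v : ℍ[ℝ] × ℍ[ℝ], v ≠ 0 ∧
      g.val 0 0 * v.1 + g.val 0 1 * v.2 = v.1 ∧ g.val 1 0 * v.1 + g.val 1 1 * v.2 = v.2 := by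
  by_cases h1 : g = 1
  · exact ⟨(1, 0), by simp, by simp [h1]⟩
  let L : (ℍ[ℝ] × ℍ[ℝ]) →ₗ[ℝ] (ℍ[ℝ] × ℍ[ℝ]) :=
    ((LinearMap.mulLeft ℝ (g.val 0 0)).coprod (LinearMap.mulLeft ℝ (g.val 0 1))).prod
      ((LinearMap.mulLeft ℝ (g.val 1 0)).coprod (LinearMap.mulLeft ℝ (g.val 1 1)))
  have hL : ∀ p, L p + (g.val 0 2, g.val 1 2) = affAct g.val p := fun p => rfl
  obtain ⟨v, hv0, hv⟩ := L.exists_ne_zero_apply_eq_self_of_forall_apply_add_ne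
    (g.val 0 2, g.val 1 2) fun p hp => h1 (hg.2 p (by rw [← hL, hp]))
  exact ⟨v, hv0, congrArg Prod.fst hv, congrArg Prod.snd hv⟩

theorem IsFreeAffine.fixes_one_zero_or_exists_fixes_e_one {g : 𝕄ˣ} (hg : IsFreeAffine g) :
    (g.val 0 0 = 1 ∧ g.val 1 0 = 0) ∨
      ∃ e, g.val 0 0 * e + g.val 0 1 = e ∧ g.val 1 0 * e + g.val 1 1 = 1 :=
  let ⟨_, hv, h1, h2⟩ := hg.exists_linear_fixed
  _root_.fixes_one_zero_or_exists_fixes_e_one hv h1 h2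

def freeCentralizer (g : 𝕄ˣ) : Set 𝕄ˣ :=
  {h | IsFreeAffine h ∧ Commute g h}

theorem conj_mem_freeCentralizer {P g h : 𝕄ˣ} (hP : IsAffMat P.val) (hh : h ∈ freeCentralizer g) :
    P⁻¹ * h * P ∈ freeCentralizer (P⁻¹ * g * P) :=
  ⟨hh.1.conj hP, by simpa [MulAut.conj_apply] using hh.2.map (MulAut.conj P⁻¹)⟩

def AffConjInto (S : Set 𝕄ˣ) (K : 𝕄 → Prop) : Prop :=
  ∃ P : 𝕄ˣ, IsAffMat P.val ∧ ∀ h ∈ S, K (P⁻¹ * h * P).val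

theorem AffConjInto.mono {S T : Set 𝕄ˣ} {K : 𝕄 → Prop} (hST : S ⊆ T) (hT : AffConjInto T K) :
    AffConjInto S K :=
  let ⟨P, hP, hK⟩ := hT
  ⟨P, hP, fun h hh => hK h (hST hh)⟩

theorem AffConjInto.of_conj {S T : Set 𝕄ˣ} {K : 𝕄 → Prop} {P : 𝕄ˣ} (hP : IsAffMat P.val)
    (hST : ∀ h ∈ S, P⁻¹ * h * P ∈ T) (hT : AffConjInto T K) : AffConjInto S K := by
  obtain ⟨P', hP', hK⟩ := hT
  refine ⟨P * P', hP.mul hP', fun h hh => ?_⟩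
  have := hK _ (hST h hh)
  rwa [show P'⁻¹ * (P⁻¹ * h * P) * P' = (P * P')⁻¹ * h * (P * P') by group] at this

theorem AffConjInto.of_forall {S : Set 𝕄ˣ} {K : 𝕄 → Prop} (h : ∀ g ∈ S, K g.val) :
    AffConjInto S K :=
  ⟨1, by simpa using IsAffMat.one, fun g hg => by simpa using h g hg⟩

theorem AffConjInto.of_freeCentralizer_conj {g P : 𝕄ˣ} {K : 𝕄 → Prop} (hP : IsAffMat P.val)
    (h : AffConjInto (freeCentralizer (P⁻¹ * g * P)) K) : AffConjInto (freeCentralizer g) K :=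
  h.of_conj hP fun _ hh => conj_mem_freeCentralizer hP hh

-- Its first column `(e, 1)` is a fixed vector of the linear part to be triangularised.
def frameUnit (e : ℍ[ℝ]) : 𝕄ˣ where
  val := !![e, 1, 0; 1, 0, 0; 0, 0, 1]
  inv := !![0, 1, 0; 1, -e, 0; 0, 0, 1]
  val_inv := by simp [Matrix.one_fin_three]
  inv_val := by simp [Matrix.one_fin_three]

theorem frameUnit_conj {a b c d r s e : ℍ[ℝ]} (he₁ : a * e + b = e) (he₂ : c * e + d = 1) :
    ((frameUnit e)⁻¹ : 𝕄ˣ).val * !![a, b, r; c, d, s; 0, 0, 1] * (frameUnit e).val =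
      !![1, c, s; 0, a - e * c, r - e * s; 0, 0, 1] := by
  simp only [frameUnit, Units.inv_mk, Matrix.mul_fin_three, mul_one, mul_zero, add_zero, one_mul,
    neg_mul, zero_mul, zero_add, ← sub_eq_add_neg, he₂, EmbeddingLike.apply_eq_iff_eq, vecCons_inj,
    and_true, true_and]
  rw [show (a - e * c) * e + (b - e * d) = a * e + b - e * (c * e + d) by noncomm_ring, he₁, he₂,
    mul_one, sub_self]

def shearUnit (E C : ℍ[ℝ]) : 𝕄ˣ where
  val := !![1, E, E * C; 0, 1, C; 0, 0, 1]
  inv := !![1, -E, 0; 0, 1, -C; 0, 0, 1]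
  val_inv := by simp [Matrix.one_fin_three]
  inv_val := by simp [Matrix.one_fin_three]

theorem exists_shearUnit_conj {B D R S : ℍ[ℝ]} (hD : D ≠ 1) :
    ∃ U : 𝕄ˣ, IsAffMat U.val ∧ ∃ Y,
      (U⁻¹ : 𝕄ˣ).val * !![1, B, R; 0, D, S; 0, 0, 1] * U.val = !![1, 0, Y; 0, D, 0; 0, 0, 1] := by
  have hD' : 1 - D ≠ 0 := sub_ne_zero.mpr hD.symm
  obtain ⟨E, hE⟩ : ∃ E, E * (1 - D) = -B := ⟨-B * (1 - D)⁻¹, inv_mul_cancel_right₀ hD' _⟩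
  obtain ⟨C, hC⟩ : ∃ C, (1 - D) * C = S := ⟨(1 - D)⁻¹ * S, mul_inv_cancel_left₀ hD' _⟩
  refine ⟨shearUnit E C, by simp [IsAffMat, shearUnit], R - E * S, ?_⟩
  simp only [shearUnit, Units.inv_mk, Matrix.mul_fin_three]
  have h01 : E + (B + -(E * D)) = 0 := by rw [← neg_neg B, ← hE]; noncomm_ring
  simp only [mul_one, mul_zero, add_zero, one_mul, neg_mul, zero_mul, zero_add,
    EmbeddingLike.apply_eq_iff_eq, vecCons_inj, and_true, true_and]
  refine ⟨⟨h01, ?_⟩, by rw [← hC]; noncomm_ring⟩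
  rw [← add_mul, h01, zero_mul, zero_add, sub_eq_add_neg]

theorem inK2_of_mem_freeCentralizer {g h : 𝕄ˣ} (hg : InK2 g.val) (hb : g.val 0 1 ≠ 0)
    (hh : h ∈ freeCentralizer g) : InK2 h.val := by
  obtain ⟨h00, h10, h11, hg⟩ := hg
  obtain ⟨b, r, s, hgv⟩ : ∃ b r s, g.val = !![1, b, r; 0, 1, s; 0, 0, 1] :=
    ⟨_, _, _, by rw [hg.eta, h00, h10, h11]⟩
  obtain ⟨m, n, u, p, q, w, hhv⟩ := hh.1.1.exists_eq
  replace hb : b ≠ 0 := by simpa [hgv] using hb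
  have hcomm : g.val * h.val = h.val * g.val := congrArg Units.val hh.2.eq
  rw [hgv, hhv] at hcomm
  simp only [Matrix.mul_fin_three, EmbeddingLike.apply_eq_iff_eq, vecCons_inj, mul_zero, mul_one,
    zero_mul, one_mul, add_zero, zero_add, and_true, true_and] at hcomm
  have hp : p = 0 := (mul_eq_zero.mp (add_eq_left.mp hcomm.1.1)).resolve_left hb
  have hbq : b * q = m * b := add_left_cancel (hcomm.1.2.1.trans (add_comm _ _))
  have hdich : (m = 1 ∧ p = 0) ∨ ∃ e, m * e + n = e ∧ p * e + q = 1 := by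
    simpa [hhv] using hh.1.fixes_one_zero_or_exists_fixes_e_one
  suffices hmq : m = 1 ∧ q = 1 by
    rw [hhv]
    exact ⟨hmq.1, hp, hmq.2, by simp [IsAffMat]⟩
  rcases hdich with ⟨rfl, -⟩ | ⟨e, -, he⟩
  · exact ⟨rfl, mul_left_cancel₀ hb (by rw [hbq, one_mul, mul_one])⟩
  · rw [hp, zero_mul, zero_add] at he
    exact ⟨mul_right_cancel₀ hb (by rw [← hbq, he, mul_one, one_mul]), he⟩

theorem inK1_of_mem_freeCentralizer {g h : 𝕄ˣ} {D Y : ℍ[ℝ]} (hg : IsFreeAffine g)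
    (hgv : g.val = !![1, 0, Y; 0, D, 0; 0, 0, 1]) (hD : D ≠ 1) (hh : h ∈ freeCentralizer g) :
    InK1 h.val := by
  have hY : Y ≠ 0 := by
    rintro rfl
    have h1 := hg.2 0 (by simp [hgv, affAct])
    rw [h1, Units.val_one] at hgv
    exact hD (by simpa using (congrFun (congrFun hgv 1) 1).symm)
  obtain ⟨m, n, u, p, q, w, hhv⟩ := hh.1.1.exists_eq
  have hcomm : g.val * h.val = h.val * g.val := congrArg Units.val hh.2.eq
  rw [hgv, hhv] at hcomm
  simp only [Matrix.mul_fin_three, EmbeddingLike.apply_eq_iff_eq, vecCons_inj, mul_zero, mul_one,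
    zero_mul, one_mul, add_zero, zero_add, and_true, true_and] at hcomm
  obtain ⟨⟨hn, hm⟩, hp, -, hw⟩ := hcomm
  replace hp : p = 0 := (mul_left_eq_self₀.mp hp).resolve_left hD
  have hq : h.val 1 1 ≠ 0 := hh.1.1.units_apply_one_one_ne_zero (by simp [hhv, hp])
  rw [hhv] at hq ⊢
  rw [hp, zero_mul, zero_add] at hw
  exact ⟨(mul_left_eq_self₀.mp (add_left_cancel (hm.trans (add_comm _ _))).symm).resolve_right hY,
    (mul_right_eq_self₀.mp hn.symm).resolve_left hD, hp, hq,
    (mul_left_eq_self₀.mp hw).resolve_left hD, by simp [IsAffMat]⟩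

theorem affConjInto_freeCentralizer_of_upper {g : 𝕄ˣ} (hg : IsFreeAffine g)
    (h00 : g.val 0 0 = 1) (h10 : g.val 1 0 = 0) (hne : ¬(g.val 0 1 = 0 ∧ g.val 1 1 = 1)) :
    AffConjInto (freeCentralizer g) InK1 ∨ AffConjInto (freeCentralizer g) InK2 := by
  by_cases hd : g.val 1 1 = 1
  · exact Or.inr (.of_forall fun h hh =>
      inK2_of_mem_freeCentralizer ⟨h00, h10, hd, hg.1⟩ (fun hb => hne ⟨hb, hd⟩) hh)
  obtain ⟨U, hU, Y, hUg⟩ := exists_shearUnit_conj (B := g.val 0 1) (R := g.val 0 2)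
    (S := g.val 1 2) hd
  have hgv : g.val = !![1, g.val 0 1, g.val 0 2; 0, g.val 1 1, g.val 1 2; 0, 0, 1] := by
    conv_lhs => rw [hg.1.eta, h00, h10]
  have hg' : (U⁻¹ * g * U).val = !![1, 0, Y; 0, g.val 1 1, 0; 0, 0, 1] := by
    rw [← hUg, ← hgv, Units.val_mul, Units.val_mul]
  exact Or.inl (.of_freeCentralizer_conj hU (.of_forall fun h hh =>
    inK1_of_mem_freeCentralizer (hg.conj hU) hg' hd hh))

theorem affConjInto_freeCentralizer {g : 𝕄ˣ} (hg : IsFreeAffine g) (hK2 : ¬InK2 g.val) :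
    AffConjInto (freeCentralizer g) InK1 ∨ AffConjInto (freeCentralizer g) InK2 := by
  rcases hg.fixes_one_zero_or_exists_fixes_e_one with ⟨h00, h10⟩ | ⟨e, he₁, he₂⟩
  · exact affConjInto_freeCentralizer_of_upper hg h00 h10 fun h => hK2 ⟨h00, h10, h.2, hg.1⟩
  have hQ : IsAffMat (frameUnit e).val := by simp [IsAffMat, frameUnit]
  have hg' : ((frameUnit e)⁻¹ * g * frameUnit e).val =
      !![1, g.val 1 0, g.val 1 2; 0, g.val 0 0 - e * g.val 1 0, g.val 0 2 - e * g.val 1 2;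
        0, 0, 1] := by
    rw [Units.val_mul, Units.val_mul]
    conv_lhs => rw [hg.1.eta]
    exact frameUnit_conj he₁ he₂
  have hne : ¬(g.val 1 0 = 0 ∧ g.val 0 0 - e * g.val 1 0 = 1) := by
    rintro ⟨h10, h00⟩
    rw [h10, mul_zero, sub_zero] at h00
    rw [h10, zero_mul, zero_add] at he₂
    exact hK2 ⟨h00, h10, he₂, hg.1⟩
  rcases affConjInto_freeCentralizer_of_upper (hg.conj hQ) (by simp [hg']) (by simp [hg'])
    (by simpa [hg'] using hne) with h | h
  exacts [Or.inl (.of_freeCentralizer_conj hQ h), Or.inr (.of_freeCentralizer_conj hQ h)]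

/-- If an abelian subgroup `Γ ⊆ Aff(2,ℍ)` acts freely on ℍ², then `Γ` is conjugate in
Aff(2,ℍ) to a subgroup of the group of matrices `[[1,0,r],[0,d,0],[0,0,1]]` (`d ≠ 0`)
or to a subgroup of the group of matrices `[[1,b,r],[0,1,s],[0,0,1]]`. -/
theorem abelian_subgroup_conjugation
    (Γ : Subgroup (Matrix (Fin 3) (Fin 3) ℍ[ℝ])ˣ)
    (haff : ∀ g ∈ Γ, IsAffMat g.val)
    (habel : ∀ A ∈ Γ, ∀ B ∈ Γ, A * B = B * A)
    (hfree : ActsFreely Γ) :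
    ∃ P : (Matrix (Fin 3) (Fin 3) ℍ[ℝ])ˣ, IsAffMat P.val ∧
      ((∀ g ∈ Γ, InK1 ((P⁻¹ * g * P).val)) ∨ (∀ g ∈ Γ, InK2 ((P⁻¹ * g * P).val))) := by
  have hΓ : ∀ g ∈ Γ, IsFreeAffine g := fun g hg => ⟨haff g hg, fun p hp => hfree g hg ⟨p, hp⟩⟩
  suffices AffConjInto Γ InK1 ∨ AffConjInto Γ InK2 by
    rcases this with ⟨P, hP, hK⟩ | ⟨P, hP, hK⟩
    exacts [⟨P, hP, Or.inl hK⟩, ⟨P, hP, Or.inr hK⟩]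
  by_cases hK2 : ∀ g ∈ Γ, InK2 g.val
  · exact Or.inr (.of_forall hK2)
  push Not at hK2
  obtain ⟨g, hg, hgK2⟩ := hK2
  have hsub : (Γ : Set _) ⊆ freeCentralizer g := fun h hh => ⟨hΓ h hh, habel g hg h hh⟩
  exact (affConjInto_freeCentralizer (hΓ g hg) hgK2).imp (·.mono hsub) (·.mono hsub)
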